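/- Fix x₀ in a metric space X and s ∈ [0,1). Then the function ρ(y) = (1 + d(x₀,y))^s is admissible: there exist positive constants C₀ and k₀ (one may take k₀ = s/(1-s)) such that 1/ρ(x) ≤ C₀ (1/ρ(y)) (1 + d(x,y)/ρ(y))^{k₀} for all x, y ∈ X. -/

import Mathlib

open Metric

/-- For a fixed `x₀` and `s ∈ [0,1)`, the function `ρ(y) = (1 + d(x₀,y))^s` is
admissible: there exist positive constants `C₀` and `k₀` (one may take
`k₀ = s/(1-s)`) such that
`1/ρ(x) ≤ C₀ (1/ρ(y)) (1 + d(x,y)/ρ(y))^{k₀}` for all `x, y`. -/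
theorem stmt_2 {X : Type*} [MetricSpace X] (x₀ : X) (s : ℝ) (hs0 : 0 ≤ s) (hs1 : s < 1) :
    ∃ C₀ k₀ : ℝ, 0 < C₀ ∧ 0 < k₀ ∧ ∀ x y : X,
      1 / (1 + dist x₀ x) ^ s ≤
        C₀ * (1 / (1 + dist x₀ y) ^ s) *
          (1 + dist x y / (1 + dist x₀ y) ^ s) ^ k₀ := by
  have h1s : 0 < 1 - s := by linarith
  set k₀ : ℝ := s / (1 - s) + 1 with hkdef
  have hk0 : 0 < k₀ := by positivity
  have hk1 : 1 ≤ k₀ := by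
    have h := div_nonneg hs0 h1s.le
    rw [hkdef]; linarith
  have hexp : (1 - s) * k₀ = 1 := by
    have hne := h1s.ne'
    rw [hkdef, mul_add, mul_div_assoc', mul_comm (1 - s) s, mul_div_assoc, div_self hne]; ring
  refine ⟨2 ^ k₀, k₀, Real.rpow_pos_of_pos two_pos _, hk0, fun x y => ?_⟩
  set a : ℝ := 1 + dist x₀ x with hadef
  set b : ℝ := 1 + dist x₀ y with hbdef
  set d : ℝ := dist x y with hddef
  have ha : 1 ≤ a := le_add_of_nonneg_right dist_nonneg
  have hb : 1 ≤ b := le_add_of_nonneg_right dist_nonneg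
  have ha0 : (0:ℝ) < a := lt_of_lt_of_le one_pos ha
  have hb0 : (0:ℝ) < b := lt_of_lt_of_le one_pos hb
  have hd0 : (0:ℝ) ≤ d := dist_nonneg
  have htri : b ≤ a + d := by
    have := dist_triangle x₀ x y
    rw [hadef, hbdef, hddef]; linarith
  have has : 1 ≤ a ^ s := Real.one_le_rpow ha hs0
  have hbs : 0 < b ^ s := Real.rpow_pos_of_pos hb0 s
  have hbase1 : 1 ≤ (1 + d / b ^ s) ^ k₀ :=
    Real.one_le_rpow (le_add_of_nonneg_right (by positivity)) hk0.le
  rcases le_or_gt b (2 * a) with hcase | hcase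
  · -- b ≤ 2a
    have h1 : b ^ s ≤ 2 ^ s * a ^ s := by
      calc b ^ s ≤ (2 * a) ^ s := Real.rpow_le_rpow hb0.le hcase hs0
        _ = 2 ^ s * a ^ s := Real.mul_rpow (by norm_num) ha0.le
    have h2 : 1 / a ^ s ≤ 2 ^ s / b ^ s := by
      rw [div_le_div_iff₀ (by positivity) hbs]
      nlinarith
    have h3 : (2:ℝ) ^ s ≤ 2 ^ k₀ :=
      Real.rpow_le_rpow_of_exponent_le one_le_two (by linarith)
    calc 1 / a ^ s ≤ 2 ^ s / b ^ s := h2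
      _ ≤ 2 ^ k₀ / b ^ s := by gcongr
      _ = 2 ^ k₀ * (1 / b ^ s) * 1 := by ring
      _ ≤ 2 ^ k₀ * (1 / b ^ s) * (1 + d / b ^ s) ^ k₀ := by gcongr
  · -- 2a < b
    have hd : b / 2 ≤ d := by linarith
    have hpow : b ^ (1 - s) = b / b ^ s := by
      rw [Real.rpow_sub hb0, Real.rpow_one]
    have hstep : b ^ (1 - s) / 2 ≤ 1 + d / b ^ s := by
      have h1 : b / 2 / b ^ s ≤ d / b ^ s := by gcongr
      have h2 : b ^ (1 - s) / 2 = b / 2 / b ^ s := by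
        rw [hpow]; ring
      nlinarith [div_nonneg hd0 hbs.le]
    have hkey : b / 2 ^ k₀ ≤ (1 + d / b ^ s) ^ k₀ := by
      have h1 := Real.rpow_le_rpow (by positivity) hstep hk0.le
      rwa [Real.div_rpow (by positivity) (by norm_num), ← Real.rpow_mul hb0.le,
        hexp, Real.rpow_one] at h1
    have hkey' : b / 2 ^ k₀ ≤ (1 + d / b ^ s) ^ k₀ := hkey
    calc 1 / a ^ s ≤ 1 := by
          rw [div_le_one (by positivity)]; exact has
      _ ≤ b ^ (1 - s) := Real.one_le_rpow hb h1s.le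
      _ = 2 ^ k₀ * (1 / b ^ s) * (b / 2 ^ k₀) := by
          rw [hpow]
          have h2k : (0:ℝ) < 2 ^ k₀ := Real.rpow_pos_of_pos two_pos _
          field_simp
      _ ≤ 2 ^ k₀ * (1 / b ^ s) * (1 + d / b ^ s) ^ k₀ := by gcongr
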